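/- Let n ≥ 3 and let a, b, r be natural numbers with b ≤ r, and let H_{r−b} denote the (r−b)-th physicists' Hermite polynomial. On functions g : ℝ^n × ℝ^n × ℝ^n → ℂ define the raising operators R_j g = q_j g − ∂g/∂q_j and the operator T g = (x_{n−1} − i y_{n−1}) R_n g − (x_n − i y_n) R_{n−1} g. Define w(x,y,q) = (x_1 + i y_1)^a · T^b ( H_{r−b}(q_n) · exp(−(1/2) Σ_{j=1}^n q_j²) ). Then w is symplectic h-monogenic: D_s w = 0 and D_t w = 0 identically. -/

import Mathlib

open Complex Finset Matrix

noncomputable section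

/-- A point of `ℝ^n × ℝ^n × ℝ^n`, with coordinates `(x, y, q)`. -/
abbrev Vec (n : ℕ) := (Fin n → ℝ) × (Fin n → ℝ) × (Fin n → ℝ)

/-- Partial derivative in the variable `x_j`. -/
noncomputable def pdx (n : ℕ) (j : Fin n) (f : Vec n → ℂ) : Vec n → ℂ :=
  fun p => deriv (fun t => f (Function.update p.1 j t, p.2.1, p.2.2)) (p.1 j)

/-- Partial derivative in the variable `y_j`. -/
noncomputable def pdy (n : ℕ) (j : Fin n) (f : Vec n → ℂ) : Vec n → ℂ :=
  fun p => deriv (fun t => f (p.1, Function.update p.2.1 j t, p.2.2)) (p.2.1 j)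

/-- Partial derivative in the variable `q_j`. -/
noncomputable def pdq (n : ℕ) (j : Fin n) (f : Vec n → ℂ) : Vec n → ℂ :=
  fun p => deriv (fun t => f (p.1, p.2.1, Function.update p.2.2 j t)) (p.2.2 j)

/-- The symplectic Dirac operator `D_s f = Σ_j (i q_j ∂f/∂y_j − ∂²f/∂q_j∂x_j)`. -/
noncomputable def Ds (n : ℕ) (f : Vec n → ℂ) : Vec n → ℂ :=
  fun p => ∑ j : Fin n, (Complex.I * (p.2.2 j : ℂ) * pdy n j f p - pdq n j (pdx n j f) p)

/-- The twisted symplectic Dirac operator `D_t f = Σ_j (i q_j ∂f/∂x_j + ∂²f/∂y_j∂q_j)`. -/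
noncomputable def Dt (n : ℕ) (f : Vec n → ℂ) : Vec n → ℂ :=
  fun p => ∑ j : Fin n, (Complex.I * (p.2.2 j : ℂ) * pdx n j f p + pdy n j (pdq n j f) p)

/-- The Fischer dual `X_s f = Σ_j (y_j ∂f/∂q_j + i q_j x_j f)`. -/
noncomputable def Xs (n : ℕ) (f : Vec n → ℂ) : Vec n → ℂ :=
  fun p => ∑ j : Fin n, ((p.2.1 j : ℂ) * pdq n j f p + Complex.I * (p.2.2 j : ℂ) * (p.1 j : ℂ) * f p)

/-- The Fischer dual `X_t f = Σ_j (x_j ∂f/∂q_j − i y_j q_j f)`. -/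
noncomputable def Xt (n : ℕ) (f : Vec n → ℂ) : Vec n → ℂ :=
  fun p => ∑ j : Fin n, ((p.1 j : ℂ) * pdq n j f p - Complex.I * (p.2.1 j : ℂ) * (p.2.2 j : ℂ) * f p)

/-- The Euler operator `𝔼 f = Σ_j (x_j ∂f/∂x_j + y_j ∂f/∂y_j)`. -/
noncomputable def EulerOp (n : ℕ) (f : Vec n → ℂ) : Vec n → ℂ :=
  fun p => ∑ j : Fin n, ((p.1 j : ℂ) * pdx n j f p + (p.2.1 j : ℂ) * pdy n j f p)

/-- The Laplacian in the `(x,y)` variables. -/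
noncomputable def Lap (n : ℕ) (f : Vec n → ℂ) : Vec n → ℂ :=
  fun p => ∑ j : Fin n, (pdx n j (pdx n j f) p + pdy n j (pdy n j f) p)
/-- The physicists' Hermite polynomials, via the recurrence
`H_0 = 1`, `H_1(t) = 2t`, `H_{k+2}(t) = 2t H_{k+1}(t) − 2(k+1) H_k(t)`. -/
noncomputable def hermiteP : ℕ → ℝ → ℝ
  | 0 => fun _ => 1
  | 1 => fun t => 2 * t
  | (k + 2) => fun t => 2 * t * hermiteP (k + 1) t - 2 * (k + 1) * hermiteP k t

/-- The raising operator `R_j g = q_j g − ∂g/∂q_j`. -/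
noncomputable def Rop (n : ℕ) (j : Fin n) (g : Vec n → ℂ) : Vec n → ℂ :=
  fun p => (p.2.2 j : ℂ) * g p - pdq n j g p

/-- `T g = (x_{n−1} − i y_{n−1}) R_n g − (x_n − i y_n) R_{n−1} g`, with `i1` playing the
role of the index `n−1` and `i2` the index `n`. -/
noncomputable def Tmap (n : ℕ) (i1 i2 : Fin n) (g : Vec n → ℂ) : Vec n → ℂ :=
  fun p => ((p.1 i1 : ℂ) - Complex.I * (p.2.1 i1 : ℂ)) * Rop n i2 g p -
    ((p.1 i2 : ℂ) - Complex.I * (p.2.1 i2 : ℂ)) * Rop n i1 g p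

/-! The functions `z₀^a w₁^m w₂^l H_{k₁}(q_{n-1}) H_{k₂}(q_n) e^{-|q|²/2}`, where `z₀ = x₁ + i y₁`
and `w_k = x_k - i y_k`, span a space of smooth functions on which `D_s`, `D_t` and `T` act
explicitly. Each of them is a product `φ(x, y) ψ(q)`, so `D_s` and `D_t` split into one term per
coordinate `j`: the term vanishes when `φ` is holomorphic in `x_j + i y_j` and `ψ` is a pure
Gaussian in `q_j`, and equals `∂φ/∂x_j · R_j ψ` (times `i` for `D_t`) when `φ` is antiholomorphic
in `x_j + i y_j`. Hence `D_t = i D_s` on the span, `D_s` trades a factor `w_k` for a raising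
operator `R_k`, and a direct computation on the basis gives `D_s T = T D_s` there: the Leibniz
terms `R₁ R₂ ψ` and `R₂ R₁ ψ` produced by differentiating `w₁` and `w₂` cancel. As `T` does not
differentiate in `x, y`, the vector `w` is `T^b` applied to `z₀^a H_c(q_n) e^{-|q|²/2}`, which
has `m = l = 0` and is therefore killed by `D_s`; hence so is `w`, and `D_t w = i D_s w = 0`. -/

open Function
open scoped ContDiff

namespace SymplecticMonogenic

variable {n : ℕ}

lemma hermiteP_add_two (k : ℕ) :
    hermiteP (k + 2) = fun t => 2 * t * hermiteP (k + 1) t - 2 * (k + 1) * hermiteP k t := by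
  funext t; rw [hermiteP]

lemma hermiteP_succ (k : ℕ) (t : ℝ) :
    hermiteP (k + 1) t = 2 * t * hermiteP k t - 2 * k * hermiteP (k - 1) t := by
  cases k with
  | zero => simp [hermiteP]
  | succ k => simp [hermiteP_add_two]

lemma hasDerivAt_hermiteP (k : ℕ) (t : ℝ) :
    HasDerivAt (hermiteP k) (2 * k * hermiteP (k - 1) t) t := by
  induction k using Nat.twoStepInduction generalizing t with
  | zero => simpa [hermiteP] using hasDerivAt_const t (1 : ℝ)
  | one => simpa [hermiteP] using (hasDerivAt_id t).const_mul (2 : ℝ)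
  | more k ih₀ ih₁ =>
    rw [hermiteP_add_two]
    refine ((((hasDerivAt_id t).const_mul 2).fun_mul (ih₁ t)).fun_sub
      ((ih₀ t).const_mul (2 * ((k : ℝ) + 1)))).congr_deriv ?_
    simp only [id, Nat.add_sub_cancel]
    push_cast
    linear_combination -(2 * (k : ℝ) + 2) * hermiteP_succ k t

lemma contDiff_hermiteP (k : ℕ) : ContDiff ℝ ∞ (hermiteP k) := by
  induction k using Nat.twoStepInduction with
  | zero => exact contDiff_const
  | one => exact contDiff_const.mul contDiff_id
  | more k ih₀ ih₁ => rw [hermiteP_add_two]; fun_prop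

section Linearity

variable {f g : Vec n → ℂ}

lemma pdx_eq_fderiv (hf : Differentiable ℝ f) (j : Fin n) :
    pdx n j f = fun p => fderiv ℝ f p (Pi.single j 1, 0, 0) := by
  funext p
  have hline :
      HasDerivAt (fun t => (update p.1 j t, p.2.1, p.2.2)) (Pi.single j 1, 0, 0) (p.1 j) :=
    (hasDerivAt_update p.1 j _).prodMk ((hasDerivAt_const _ _).prodMk (hasDerivAt_const _ _))
  exact ((hf p).hasFDerivAt.comp_hasDerivAt_of_eq _ hline (by simp)).deriv

lemma pdy_eq_fderiv (hf : Differentiable ℝ f) (j : Fin n) :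
    pdy n j f = fun p => fderiv ℝ f p (0, Pi.single j 1, 0) := by
  funext p
  have hline :
      HasDerivAt (fun t => (p.1, update p.2.1 j t, p.2.2)) (0, Pi.single j 1, 0) (p.2.1 j) :=
    (hasDerivAt_const _ _).prodMk ((hasDerivAt_update p.2.1 j _).prodMk (hasDerivAt_const _ _))
  exact ((hf p).hasFDerivAt.comp_hasDerivAt_of_eq _ hline (by simp)).deriv

lemma pdq_eq_fderiv (hf : Differentiable ℝ f) (j : Fin n) :
    pdq n j f = fun p => fderiv ℝ f p (0, 0, Pi.single j 1) := by
  funext p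
  have hline :
      HasDerivAt (fun t => (p.1, p.2.1, update p.2.2 j t)) (0, 0, Pi.single j 1) (p.2.2 j) :=
    (hasDerivAt_const _ _).prodMk ((hasDerivAt_const _ _).prodMk (hasDerivAt_update p.2.2 j _))
  exact ((hf p).hasFDerivAt.comp_hasDerivAt_of_eq _ hline (by simp)).deriv

lemma contDiff_pdx (hf : ContDiff ℝ ∞ f) (j : Fin n) : ContDiff ℝ ∞ (pdx n j f) := by
  rw [pdx_eq_fderiv (hf.differentiable (by simp))]
  exact (hf.fderiv_right le_rfl).clm_apply contDiff_const

lemma contDiff_pdq (hf : ContDiff ℝ ∞ f) (j : Fin n) : ContDiff ℝ ∞ (pdq n j f) := by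
  rw [pdq_eq_fderiv (hf.differentiable (by simp))]
  exact (hf.fderiv_right le_rfl).clm_apply contDiff_const

lemma pdx_add (hf : Differentiable ℝ f) (hg : Differentiable ℝ g) (j : Fin n) :
    pdx n j (f + g) = pdx n j f + pdx n j g := by
  simp only [pdx_eq_fderiv, hf, hg, hf.add hg, fderiv_add (hf _) (hg _)]
  rfl

lemma pdy_add (hf : Differentiable ℝ f) (hg : Differentiable ℝ g) (j : Fin n) :
    pdy n j (f + g) = pdy n j f + pdy n j g := by
  simp only [pdy_eq_fderiv, hf, hg, hf.add hg, fderiv_add (hf _) (hg _)]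
  rfl

lemma pdq_add (hf : Differentiable ℝ f) (hg : Differentiable ℝ g) (j : Fin n) :
    pdq n j (f + g) = pdq n j f + pdq n j g := by
  simp only [pdq_eq_fderiv, hf, hg, hf.add hg, fderiv_add (hf _) (hg _)]
  rfl

lemma pdx_smul (c : ℂ) (f : Vec n → ℂ) (j : Fin n) : pdx n j (c • f) = c • pdx n j f :=
  funext fun _ => deriv_const_mul_field c

lemma pdy_smul (c : ℂ) (f : Vec n → ℂ) (j : Fin n) : pdy n j (c • f) = c • pdy n j f :=
  funext fun _ => deriv_const_mul_field c

lemma pdq_smul (c : ℂ) (f : Vec n → ℂ) (j : Fin n) : pdq n j (c • f) = c • pdq n j f :=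
  funext fun _ => deriv_const_mul_field c

end Linearity

section Operators

variable {f g : Vec n → ℂ}

lemma Ds_add (hf : ContDiff ℝ ∞ f) (hg : ContDiff ℝ ∞ g) : Ds n (f + g) = Ds n f + Ds n g := by
  have hf' := hf.differentiable (by simp)
  have hg' := hg.differentiable (by simp)
  have hfx j := (contDiff_pdx hf j).differentiable (by simp)
  have hgx j := (contDiff_pdx hg j).differentiable (by simp)
  funext p
  simp only [Ds, pdy_add hf' hg', pdx_add hf' hg', pdq_add (hfx _) (hgx _), Pi.add_apply,
    ← Finset.sum_add_distrib]
  exact Finset.sum_congr rfl fun _ _ => by ring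

lemma Dt_add (hf : ContDiff ℝ ∞ f) (hg : ContDiff ℝ ∞ g) : Dt n (f + g) = Dt n f + Dt n g := by
  have hf' := hf.differentiable (by simp)
  have hg' := hg.differentiable (by simp)
  have hfq j := (contDiff_pdq hf j).differentiable (by simp)
  have hgq j := (contDiff_pdq hg j).differentiable (by simp)
  funext p
  simp only [Dt, pdx_add hf' hg', pdq_add hf' hg', pdy_add (hfq _) (hgq _), Pi.add_apply,
    ← Finset.sum_add_distrib]
  exact Finset.sum_congr rfl fun _ _ => by ring

lemma Tmap_add (hf : Differentiable ℝ f) (hg : Differentiable ℝ g) (i₁ i₂ : Fin n) :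
    Tmap n i₁ i₂ (f + g) = Tmap n i₁ i₂ f + Tmap n i₁ i₂ g := by
  funext p
  simp only [Tmap, Rop, pdq_add hf hg, Pi.add_apply]
  ring

lemma Ds_smul (c : ℂ) (f : Vec n → ℂ) : Ds n (c • f) = c • Ds n f := by
  funext p
  simp only [Ds, pdx_smul, pdy_smul, pdq_smul, Pi.smul_apply, smul_eq_mul, Finset.mul_sum]
  exact Finset.sum_congr rfl fun _ _ => by ring

lemma Dt_smul (c : ℂ) (f : Vec n → ℂ) : Dt n (c • f) = c • Dt n f := by
  funext p
  simp only [Dt, pdx_smul, pdy_smul, pdq_smul, Pi.smul_apply, smul_eq_mul, Finset.mul_sum]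
  exact Finset.sum_congr rfl fun _ _ => by ring

lemma Tmap_smul (c : ℂ) (f : Vec n → ℂ) (i₁ i₂ : Fin n) :
    Tmap n i₁ i₂ (c • f) = c • Tmap n i₁ i₂ f := by
  funext p
  simp only [Tmap, Rop, pdq_smul, Pi.smul_apply, smul_eq_mul]
  ring

lemma Ds_zero : Ds n (0 : Vec n → ℂ) = 0 := by simpa using Ds_smul 0 0

lemma Dt_zero : Dt n (0 : Vec n → ℂ) = 0 := by simpa using Dt_smul 0 0

lemma Tmap_zero (i₁ i₂ : Fin n) : Tmap n i₁ i₂ 0 = 0 := by simpa using Tmap_smul 0 0 i₁ i₂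

lemma Ds_sub (hf : ContDiff ℝ ∞ f) (hg : ContDiff ℝ ∞ g) : Ds n (f - g) = Ds n f - Ds n g := by
  have h := Ds_add hf (hg.const_smul (-1 : ℂ))
  rw [show (fun p => (-1 : ℂ) • g p) = (-1 : ℂ) • g from rfl, Ds_smul] at h
  simpa [sub_eq_add_neg] using h

lemma Tmap_mul_left {h : Vec n → ℂ} (hh : ∀ p q, h (p.1, p.2.1, q) = h p) (f : Vec n → ℂ)
    (i₁ i₂ : Fin n) : Tmap n i₁ i₂ (fun p => h p * f p) = fun p => h p * Tmap n i₁ i₂ f p := by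
  funext p
  simp only [Tmap, Rop, pdq, hh, deriv_const_mul_field]
  ring

lemma Tmap_iterate_mul_left {h : Vec n → ℂ} (hh : ∀ p q, h (p.1, p.2.1, q) = h p)
    (f : Vec n → ℂ) (i₁ i₂ : Fin n) (b : ℕ) :
    (Tmap n i₁ i₂)^[b] (fun p => h p * f p) = fun p => h p * (Tmap n i₁ i₂)^[b] f p := by
  induction b with
  | zero => rfl
  | succ b ih => rw [iterate_succ_apply', iterate_succ_apply', ih, Tmap_mul_left hh]

end Operators

section Tensor

def tensor (φ : (Fin n → ℝ) → (Fin n → ℝ) → ℂ) (ψ : (Fin n → ℝ) → ℂ) : Vec n → ℂ :=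
  fun p => φ p.1 p.2.1 * ψ p.2.2

def partialX (j : Fin n) (φ : (Fin n → ℝ) → (Fin n → ℝ) → ℂ) (x y : Fin n → ℝ) : ℂ :=
  deriv (fun t => φ (update x j t) y) (x j)

def partialY (j : Fin n) (φ : (Fin n → ℝ) → (Fin n → ℝ) → ℂ) (x y : Fin n → ℝ) : ℂ :=
  deriv (fun t => φ x (update y j t)) (y j)

def partialQ (j : Fin n) (ψ : (Fin n → ℝ) → ℂ) (q : Fin n → ℝ) : ℂ :=
  deriv (fun t => ψ (update q j t)) (q j)

variable (j : Fin n) (φ : (Fin n → ℝ) → (Fin n → ℝ) → ℂ) (ψ : (Fin n → ℝ) → ℂ)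

lemma pdx_tensor : pdx n j (tensor φ ψ) = tensor (partialX j φ) ψ :=
  funext fun _ => by simp only [pdx, tensor, partialX]; exact deriv_mul_const_field _

lemma pdy_tensor : pdy n j (tensor φ ψ) = tensor (partialY j φ) ψ :=
  funext fun _ => by simp only [pdy, tensor, partialY]; exact deriv_mul_const_field _

lemma pdq_tensor : pdq n j (tensor φ ψ) = tensor φ (partialQ j ψ) :=
  funext fun _ => by simp only [pdq, tensor, partialQ]; exact deriv_const_mul_field _

lemma Ds_tensor (p : Vec n) :
    Ds n (tensor φ ψ) p = ∑ j, (I * p.2.2 j * partialY j φ p.1 p.2.1 * ψ p.2.2 -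
      partialX j φ p.1 p.2.1 * partialQ j ψ p.2.2) := by
  simp only [Ds, pdx_tensor, pdy_tensor, pdq_tensor, tensor, mul_assoc]

lemma Dt_tensor (p : Vec n) :
    Dt n (tensor φ ψ) p = ∑ j, (I * p.2.2 j * partialX j φ p.1 p.2.1 * ψ p.2.2 +
      partialY j φ p.1 p.2.1 * partialQ j ψ p.2.2) := by
  simp only [Dt, pdx_tensor, pdy_tensor, pdq_tensor, tensor, mul_assoc]

def raiseQ (j : Fin n) (ψ : (Fin n → ℝ) → ℂ) (q : Fin n → ℝ) : ℂ :=
  q j * ψ q - partialQ j ψ q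

lemma Rop_tensor : Rop n j (tensor φ ψ) = tensor φ (raiseQ j ψ) := by
  funext p
  simp only [Rop, pdq_tensor, tensor, raiseQ]
  ring

variable {j φ ψ} {x y q : Fin n → ℝ}

lemma Ds_tensor_term_eq_zero (hφ : partialY j φ x y = I * partialX j φ x y)
    (hψ : partialQ j ψ q = -q j * ψ q) :
    I * q j * partialY j φ x y * ψ q - partialX j φ x y * partialQ j ψ q = 0 := by
  rw [hφ, hψ]
  linear_combination q j * partialX j φ x y * ψ q * I_sq

lemma Ds_tensor_term_eq (hφ : partialY j φ x y = -I * partialX j φ x y) :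
    I * q j * partialY j φ x y * ψ q - partialX j φ x y * partialQ j ψ q =
      partialX j φ x y * raiseQ j ψ q := by
  rw [hφ, raiseQ]
  linear_combination -q j * partialX j φ x y * ψ q * I_sq

lemma Dt_tensor_term_eq_I_mul
    (h : partialY j φ x y = -I * partialX j φ x y ∨
      partialY j φ x y = I * partialX j φ x y ∧ partialQ j ψ q = -q j * ψ q) :
    I * q j * partialX j φ x y * ψ q + partialY j φ x y * partialQ j ψ q =
      I * (I * q j * partialY j φ x y * ψ q - partialX j φ x y * partialQ j ψ q) := by
  rcases h with hφ | ⟨hφ, hψ⟩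
  · rw [hφ]
    linear_combination I * q j * partialX j φ x y * ψ q * I_sq
  · rw [hφ, hψ]
    linear_combination -I * q j * partialX j φ x y * ψ q * I_sq

lemma Dt_tensor_eq_I_smul_Ds
    (h : ∀ j x y q, partialY j φ x y = -I * partialX j φ x y ∨
      partialY j φ x y = I * partialX j φ x y ∧ partialQ j ψ q = -q j * ψ q) :
    Dt n (tensor φ ψ) = I • Ds n (tensor φ ψ) := by
  funext p
  rw [Dt_tensor, Pi.smul_apply, Ds_tensor, smul_eq_mul, Finset.mul_sum]
  exact Finset.sum_congr rfl fun j _ => Dt_tensor_term_eq_I_mul (h j _ _ _)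

end Tensor

section Factors

lemma hasDerivAt_update_apply (x : Fin n → ℝ) (i j : Fin n) (t : ℝ) :
    HasDerivAt (fun s => update x j s i) (if i = j then 1 else 0) t := by
  simpa [Pi.single_apply] using hasDerivAt_pi.1 (hasDerivAt_update x j t) i

lemma hasDerivAt_ofReal_update_apply (x : Fin n → ℝ) (i j : Fin n) (t : ℝ) :
    HasDerivAt (fun s => (update x j s i : ℂ)) (if i = j then 1 else 0) t := by
  simpa [apply_ite] using (hasDerivAt_update_apply x i j t).ofReal_comp

lemma hasDerivAt_ofReal_hermiteP_update (q : Fin n → ℝ) (i j : Fin n) (k : ℕ) :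
    HasDerivAt (fun t => (hermiteP k (update q j t i) : ℂ))
      (2 * k * hermiteP (k - 1) (q i) * if i = j then 1 else 0) (q j) := by
  have h := ((hasDerivAt_hermiteP k _).comp (q j) (hasDerivAt_update_apply q i j (q j))).ofReal_comp
  simp only [update_eq_self] at h
  convert h using 1
  · rfl
  · split_ifs <;> push_cast <;> ring

lemma hasDerivAt_gaussian_update (q : Fin n → ℝ) (j : Fin n) :
    HasDerivAt (fun t => exp (-(1 / 2 : ℂ) * ((∑ i, update q j t i ^ 2 : ℝ) : ℂ)))
      (-q j * exp (-(1 / 2 : ℂ) * ((∑ i, q i ^ 2 : ℝ) : ℂ))) (q j) := by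
  have hsum := HasDerivAt.fun_sum (u := Finset.univ)
    fun i _ => (hasDerivAt_update_apply q i j (q j)).fun_pow 2
  have h := (hsum.ofReal_comp.const_mul (-(1 / 2 : ℂ))).cexp
  simp only [update_eq_self] at h
  convert h using 1
  simp [mul_ite]
  ring

def xyMonomial (i₀ i₁ i₂ : Fin n) (a m l : ℕ) (x y : Fin n → ℝ) : ℂ :=
  ((x i₀ : ℂ) + I * y i₀) ^ a * ((x i₁ : ℂ) - I * y i₁) ^ m * ((x i₂ : ℂ) - I * y i₂) ^ l

def hermiteGaussian (i₁ i₂ : Fin n) (k₁ k₂ : ℕ) (q : Fin n → ℝ) : ℂ :=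
  hermiteP k₁ (q i₁) * hermiteP k₂ (q i₂) * exp (-(1 / 2 : ℂ) * ((∑ j, q j ^ 2 : ℝ) : ℂ))

variable (i₀ i₁ i₂ : Fin n) (a m l k₁ k₂ : ℕ) (j : Fin n) (x y q : Fin n → ℝ)

lemma partialX_xyMonomial :
    partialX j (xyMonomial i₀ i₁ i₂ a m l) x y =
      a * (if i₀ = j then 1 else 0) * xyMonomial i₀ i₁ i₂ (a - 1) m l x y +
      m * (if i₁ = j then 1 else 0) * xyMonomial i₀ i₁ i₂ a (m - 1) l x y +
      l * (if i₂ = j then 1 else 0) * xyMonomial i₀ i₁ i₂ a m (l - 1) x y := by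
  have hx (i : Fin n) := hasDerivAt_ofReal_update_apply x i j (x j)
  have h := ((((hx i₀).add_const (I * y i₀)).fun_pow a).fun_mul
    (((hx i₁).sub_const (I * y i₁)).fun_pow m)).fun_mul (((hx i₂).sub_const (I * y i₂)).fun_pow l)
  simp only [update_eq_self] at h
  rw [partialX]
  unfold xyMonomial
  rw [h.deriv]
  ring

lemma partialY_xyMonomial :
    partialY j (xyMonomial i₀ i₁ i₂ a m l) x y =
      I * a * (if i₀ = j then 1 else 0) * xyMonomial i₀ i₁ i₂ (a - 1) m l x y -
      I * m * (if i₁ = j then 1 else 0) * xyMonomial i₀ i₁ i₂ a (m - 1) l x y -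
      I * l * (if i₂ = j then 1 else 0) * xyMonomial i₀ i₁ i₂ a m (l - 1) x y := by
  have hy (i : Fin n) := (hasDerivAt_ofReal_update_apply y i j (y j)).const_mul I
  have h := ((((hy i₀).const_add (x i₀ : ℂ)).fun_pow a).fun_mul
    (((hy i₁).const_sub (x i₁ : ℂ)).fun_pow m)).fun_mul (((hy i₂).const_sub (x i₂ : ℂ)).fun_pow l)
  simp only [update_eq_self] at h
  rw [partialY]
  unfold xyMonomial
  rw [h.deriv]
  ring

lemma partialQ_hermiteGaussian :
    partialQ j (hermiteGaussian i₁ i₂ k₁ k₂) q =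
      2 * k₁ * (if i₁ = j then 1 else 0) * hermiteGaussian i₁ i₂ (k₁ - 1) k₂ q +
      2 * k₂ * (if i₂ = j then 1 else 0) * hermiteGaussian i₁ i₂ k₁ (k₂ - 1) q -
      q j * hermiteGaussian i₁ i₂ k₁ k₂ q := by
  have h := ((hasDerivAt_ofReal_hermiteP_update q i₁ j k₁).fun_mul
    (hasDerivAt_ofReal_hermiteP_update q i₂ j k₂)).fun_mul (hasDerivAt_gaussian_update q j)
  simp only [update_eq_self] at h
  rw [partialQ]
  unfold hermiteGaussian
  rw [h.deriv]
  ring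

end Factors

section Basis

variable (i₀ i₁ i₂ : Fin n) (a m l k₁ k₂ : ℕ)

lemma xyMonomial_comm : xyMonomial i₀ i₁ i₂ a m l = xyMonomial i₀ i₂ i₁ a l m := by
  funext x y; simp only [xyMonomial]; ring

lemma hermiteGaussian_comm : hermiteGaussian i₁ i₂ k₁ k₂ = hermiteGaussian i₂ i₁ k₂ k₁ := by
  funext q; simp only [hermiteGaussian]; ring

variable {i₀ i₁ i₂} {j : Fin n} {x y q : Fin n → ℝ}

lemma partialY_xyMonomial_eq_I_mul (h₁ : i₁ ≠ j) (h₂ : i₂ ≠ j) :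
    partialY j (xyMonomial i₀ i₁ i₂ a m l) x y =
      I * partialX j (xyMonomial i₀ i₁ i₂ a m l) x y := by
  simp only [partialX_xyMonomial, partialY_xyMonomial, h₁, h₂, if_false]
  ring

lemma partialY_xyMonomial_eq_neg_I_mul (h₀ : i₀ ≠ j) :
    partialY j (xyMonomial i₀ i₁ i₂ a m l) x y =
      -I * partialX j (xyMonomial i₀ i₁ i₂ a m l) x y := by
  simp only [partialX_xyMonomial, partialY_xyMonomial, h₀, if_false]
  ring

lemma partialQ_hermiteGaussian_of_ne (h₁ : i₁ ≠ j) (h₂ : i₂ ≠ j) :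
    partialQ j (hermiteGaussian i₁ i₂ k₁ k₂) q = -q j * hermiteGaussian i₁ i₂ k₁ k₂ q := by
  simp only [partialQ_hermiteGaussian, h₁, h₂, if_false]
  ring

lemma raiseQ_hermiteGaussian (h₁₂ : i₁ ≠ i₂) :
    raiseQ i₁ (hermiteGaussian i₁ i₂ k₁ k₂) = hermiteGaussian i₁ i₂ (k₁ + 1) k₂ := by
  funext q
  simp only [raiseQ, partialQ_hermiteGaussian, h₁₂.symm, if_true, if_false, hermiteGaussian,
    hermiteP_succ k₁]
  push_cast
  ring

variable (i₀ i₁ i₂) in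
def basisFn : Vec n → ℂ := tensor (xyMonomial i₀ i₁ i₂ a m l) (hermiteGaussian i₁ i₂ k₁ k₂)

lemma basisFn_comm : basisFn i₀ i₁ i₂ a m l k₁ k₂ = basisFn i₀ i₂ i₁ a l m k₂ k₁ := by
  rw [basisFn, xyMonomial_comm, hermiteGaussian_comm, basisFn]

lemma contDiff_basisFn : ContDiff ℝ ∞ (basisFn i₀ i₁ i₂ a m l k₁ k₂) := by
  have := contDiff_hermiteP k₁
  have := contDiff_hermiteP k₂
  have : ContDiff ℝ ∞ ((↑) : ℝ → ℂ) := ofRealCLM.contDiff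
  unfold basisFn tensor xyMonomial hermiteGaussian
  fun_prop

lemma Rop_basisFn (h₁₂ : i₁ ≠ i₂) :
    Rop n i₁ (basisFn i₀ i₁ i₂ a m l k₁ k₂) = basisFn i₀ i₁ i₂ a m l (k₁ + 1) k₂ := by
  rw [basisFn, Rop_tensor, raiseQ_hermiteGaussian _ _ h₁₂, basisFn]

lemma Tmap_basisFn (h₁₂ : i₁ ≠ i₂) :
    Tmap n i₁ i₂ (basisFn i₀ i₁ i₂ a m l k₁ k₂) =
      basisFn i₀ i₁ i₂ a (m + 1) l k₁ (k₂ + 1) - basisFn i₀ i₁ i₂ a m (l + 1) (k₁ + 1) k₂ := by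
  have h₂ : Rop n i₂ (basisFn i₀ i₁ i₂ a m l k₁ k₂) = basisFn i₀ i₁ i₂ a m l k₁ (k₂ + 1) := by
    rw [basisFn_comm, Rop_basisFn _ _ _ _ _ h₁₂.symm, basisFn_comm]
  funext p
  rw [Tmap, Rop_basisFn _ _ _ _ _ h₁₂, h₂]
  simp only [basisFn, tensor, xyMonomial, Pi.sub_apply]
  ring

lemma Ds_basisFn (h₀₁ : i₀ ≠ i₁) (h₀₂ : i₀ ≠ i₂) (h₁₂ : i₁ ≠ i₂) :
    Ds n (basisFn i₀ i₁ i₂ a m l k₁ k₂) =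
      (m : ℂ) • basisFn i₀ i₁ i₂ a (m - 1) l (k₁ + 1) k₂ +
      (l : ℂ) • basisFn i₀ i₁ i₂ a m (l - 1) k₁ (k₂ + 1) := by
  funext ⟨x, y, q⟩
  rw [basisFn, Ds_tensor, Fintype.sum_eq_add i₁ i₂ h₁₂]
  · rw [Ds_tensor_term_eq (partialY_xyMonomial_eq_neg_I_mul _ _ _ h₀₁),
      Ds_tensor_term_eq (partialY_xyMonomial_eq_neg_I_mul _ _ _ h₀₂),
      raiseQ_hermiteGaussian _ _ h₁₂, hermiteGaussian_comm i₁ i₂ k₁ k₂,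
      raiseQ_hermiteGaussian _ _ h₁₂.symm, hermiteGaussian_comm i₂ i₁ (k₂ + 1) k₁]
    simp only [partialX_xyMonomial, h₀₁, h₀₂, h₁₂, h₁₂.symm, if_true, if_false, basisFn, tensor,
      Pi.add_apply, Pi.smul_apply, smul_eq_mul]
    ring
  · rintro j ⟨hj₁, hj₂⟩
    exact Ds_tensor_term_eq_zero (partialY_xyMonomial_eq_I_mul _ _ _ (Ne.symm hj₁) (Ne.symm hj₂))
      (partialQ_hermiteGaussian_of_ne _ _ (Ne.symm hj₁) (Ne.symm hj₂))

lemma Dt_basisFn (h₀₁ : i₀ ≠ i₁) (h₀₂ : i₀ ≠ i₂) :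
    Dt n (basisFn i₀ i₁ i₂ a m l k₁ k₂) = I • Ds n (basisFn i₀ i₁ i₂ a m l k₁ k₂) := by
  refine Dt_tensor_eq_I_smul_Ds fun j x y q => ?_
  by_cases h₀ : i₀ = j
  · subst h₀
    exact Or.inr ⟨partialY_xyMonomial_eq_I_mul _ _ _ h₀₁.symm h₀₂.symm,
      partialQ_hermiteGaussian_of_ne _ _ h₀₁.symm h₀₂.symm⟩
  · exact Or.inl (partialY_xyMonomial_eq_neg_I_mul _ _ _ h₀)

end Basis

section Span

variable (i₀ i₁ i₂ : Fin n)

def basisSpan : Submodule ℂ (Vec n → ℂ) :=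
  Submodule.span ℂ {f | ∃ a m l k₁ k₂, basisFn i₀ i₁ i₂ a m l k₁ k₂ = f}

variable {i₀ i₁ i₂} {f : Vec n → ℂ}

lemma basisFn_mem (a m l k₁ k₂ : ℕ) : basisFn i₀ i₁ i₂ a m l k₁ k₂ ∈ basisSpan i₀ i₁ i₂ :=
  Submodule.subset_span ⟨a, m, l, k₁, k₂, rfl⟩

lemma contDiff_of_mem_basisSpan (hf : f ∈ basisSpan i₀ i₁ i₂) : ContDiff ℝ ∞ f := by
  induction hf using Submodule.span_induction with
  | mem f hf =>
    obtain ⟨a, m, l, k₁, k₂, rfl⟩ := hf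
    exact contDiff_basisFn a m l k₁ k₂
  | zero => exact contDiff_const
  | add f g _ _ hf hg => exact hf.add hg
  | smul c f _ hf => exact hf.const_smul c

lemma differentiable_of_mem_basisSpan (hf : f ∈ basisSpan i₀ i₁ i₂) : Differentiable ℝ f :=
  (contDiff_of_mem_basisSpan hf).differentiable (by simp)

lemma Tmap_mem_basisSpan (h₁₂ : i₁ ≠ i₂) (hf : f ∈ basisSpan i₀ i₁ i₂) :
    Tmap n i₁ i₂ f ∈ basisSpan i₀ i₁ i₂ := by
  induction hf using Submodule.span_induction with
  | mem f hf =>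
    obtain ⟨a, m, l, k₁, k₂, rfl⟩ := hf
    rw [Tmap_basisFn a m l k₁ k₂ h₁₂]
    exact Submodule.sub_mem _ (basisFn_mem _ _ _ _ _) (basisFn_mem _ _ _ _ _)
  | zero => simpa only [Tmap_zero] using Submodule.zero_mem _
  | add f g hf hg ihf ihg =>
    rw [Tmap_add (differentiable_of_mem_basisSpan hf) (differentiable_of_mem_basisSpan hg)]
    exact add_mem ihf ihg
  | smul c f _ ih => simpa only [Tmap_smul] using Submodule.smul_mem _ c ih

lemma Ds_mem_basisSpan (h₀₁ : i₀ ≠ i₁) (h₀₂ : i₀ ≠ i₂) (h₁₂ : i₁ ≠ i₂)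
    (hf : f ∈ basisSpan i₀ i₁ i₂) : Ds n f ∈ basisSpan i₀ i₁ i₂ := by
  induction hf using Submodule.span_induction with
  | mem f hf =>
    obtain ⟨a, m, l, k₁, k₂, rfl⟩ := hf
    rw [Ds_basisFn a m l k₁ k₂ h₀₁ h₀₂ h₁₂]
    exact add_mem (Submodule.smul_mem _ _ (basisFn_mem _ _ _ _ _))
      (Submodule.smul_mem _ _ (basisFn_mem _ _ _ _ _))
  | zero => simpa only [Ds_zero] using Submodule.zero_mem _
  | add f g hf hg ihf ihg =>
    rw [Ds_add (contDiff_of_mem_basisSpan hf) (contDiff_of_mem_basisSpan hg)]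
    exact add_mem ihf ihg
  | smul c f _ ih => simpa only [Ds_smul] using Submodule.smul_mem _ c ih

lemma Dt_eq_I_smul_Ds (h₀₁ : i₀ ≠ i₁) (h₀₂ : i₀ ≠ i₂) (hf : f ∈ basisSpan i₀ i₁ i₂) :
    Dt n f = I • Ds n f := by
  induction hf using Submodule.span_induction with
  | mem f hf =>
    obtain ⟨a, m, l, k₁, k₂, rfl⟩ := hf
    exact Dt_basisFn a m l k₁ k₂ h₀₁ h₀₂
  | zero => rw [Dt_zero, Ds_zero, smul_zero]
  | add f g hf hg ihf ihg =>
    have hf' := contDiff_of_mem_basisSpan hf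
    have hg' := contDiff_of_mem_basisSpan hg
    rw [Dt_add hf' hg', Ds_add hf' hg', ihf, ihg, smul_add]
  | smul c f _ ih => rw [Dt_smul, Ds_smul, ih, smul_comm]

lemma Ds_Tmap_basisFn (h₀₁ : i₀ ≠ i₁) (h₀₂ : i₀ ≠ i₂) (h₁₂ : i₁ ≠ i₂) (a m l k₁ k₂ : ℕ) :
    Ds n (Tmap n i₁ i₂ (basisFn i₀ i₁ i₂ a m l k₁ k₂)) =
      Tmap n i₁ i₂ (Ds n (basisFn i₀ i₁ i₂ a m l k₁ k₂)) := by
  have hG := contDiff_basisFn (i₀ := i₀) (i₁ := i₁) (i₂ := i₂)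
  -- `k - 1` truncates at `k = 0`, where the coefficient `k` vanishes anyway.
  have hcancel (F : ℕ → Vec n → ℂ) (k : ℕ) : (k : ℂ) • F (k - 1 + 1) = (k : ℂ) • F k := by
    cases k <;> simp
  rw [Tmap_basisFn a m l k₁ k₂ h₁₂, Ds_sub (hG _ _ _ _ _) (hG _ _ _ _ _),
    Ds_basisFn _ _ _ _ _ h₀₁ h₀₂ h₁₂, Ds_basisFn _ _ _ _ _ h₀₁ h₀₂ h₁₂,
    Ds_basisFn _ _ _ _ _ h₀₁ h₀₂ h₁₂,
    Tmap_add (differentiable_of_mem_basisSpan (Submodule.smul_mem _ _ (basisFn_mem _ _ _ _ _)))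
      (differentiable_of_mem_basisSpan (Submodule.smul_mem _ _ (basisFn_mem _ _ _ _ _))),
    Tmap_smul, Tmap_smul, Tmap_basisFn _ _ _ _ _ h₁₂, Tmap_basisFn _ _ _ _ _ h₁₂,
    smul_sub, smul_sub,
    hcancel (fun k => basisFn i₀ i₁ i₂ a k l (k₁ + 1) (k₂ + 1)),
    hcancel (fun k => basisFn i₀ i₁ i₂ a m k (k₁ + 1) (k₂ + 1))]
  simp only [Nat.add_sub_cancel]
  push_cast
  module

lemma Ds_Tmap_comm (h₀₁ : i₀ ≠ i₁) (h₀₂ : i₀ ≠ i₂) (h₁₂ : i₁ ≠ i₂)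
    (hf : f ∈ basisSpan i₀ i₁ i₂) : Ds n (Tmap n i₁ i₂ f) = Tmap n i₁ i₂ (Ds n f) := by
  induction hf using Submodule.span_induction with
  | mem f hf =>
    obtain ⟨a, m, l, k₁, k₂, rfl⟩ := hf
    exact Ds_Tmap_basisFn h₀₁ h₀₂ h₁₂ a m l k₁ k₂
  | zero => rw [Tmap_zero, Ds_zero, Tmap_zero]
  | add f g hf hg ihf ihg =>
    rw [Tmap_add (differentiable_of_mem_basisSpan hf) (differentiable_of_mem_basisSpan hg),
      Ds_add (contDiff_of_mem_basisSpan (Tmap_mem_basisSpan h₁₂ hf))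
        (contDiff_of_mem_basisSpan (Tmap_mem_basisSpan h₁₂ hg)),
      Ds_add (contDiff_of_mem_basisSpan hf) (contDiff_of_mem_basisSpan hg),
      Tmap_add (differentiable_of_mem_basisSpan (Ds_mem_basisSpan h₀₁ h₀₂ h₁₂ hf))
        (differentiable_of_mem_basisSpan (Ds_mem_basisSpan h₀₁ h₀₂ h₁₂ hg)), ihf, ihg]
  | smul c f _ ih => rw [Tmap_smul, Ds_smul, Ds_smul, Tmap_smul, ih]

lemma Ds_iterate_Tmap (h₀₁ : i₀ ≠ i₁) (h₀₂ : i₀ ≠ i₂) (h₁₂ : i₁ ≠ i₂)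
    (hf : f ∈ basisSpan i₀ i₁ i₂) (b : ℕ) :
    Ds n ((Tmap n i₁ i₂)^[b] f) = (Tmap n i₁ i₂)^[b] (Ds n f) := by
  induction b generalizing f with
  | zero => rfl
  | succ b ih =>
    rw [iterate_succ_apply, iterate_succ_apply, ih (Tmap_mem_basisSpan h₁₂ hf),
      Ds_Tmap_comm h₀₁ h₀₂ h₁₂ hf]

lemma iterate_Tmap_mem_basisSpan (h₁₂ : i₁ ≠ i₂) (hf : f ∈ basisSpan i₀ i₁ i₂) (b : ℕ) :
    (Tmap n i₁ i₂)^[b] f ∈ basisSpan i₀ i₁ i₂ := by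
  induction b with
  | zero => exact hf
  | succ b ih => rw [iterate_succ_apply']; exact Tmap_mem_basisSpan h₁₂ ih

lemma iterate_Tmap_basisFn_monogenic (h₀₁ : i₀ ≠ i₁) (h₀₂ : i₀ ≠ i₂) (h₁₂ : i₁ ≠ i₂)
    (a k b : ℕ) :
    Ds n ((Tmap n i₁ i₂)^[b] (basisFn i₀ i₁ i₂ a 0 0 0 k)) = 0 ∧
      Dt n ((Tmap n i₁ i₂)^[b] (basisFn i₀ i₁ i₂ a 0 0 0 k)) = 0 := by
  have hmem := basisFn_mem (i₀ := i₀) (i₁ := i₁) (i₂ := i₂) a 0 0 0 k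
  have hDs : Ds n ((Tmap n i₁ i₂)^[b] (basisFn i₀ i₁ i₂ a 0 0 0 k)) = 0 := by
    rw [Ds_iterate_Tmap h₀₁ h₀₂ h₁₂ hmem, Ds_basisFn _ _ _ _ _ h₀₁ h₀₂ h₁₂]
    simpa using iterate_fixed (Tmap_zero i₁ i₂) b
  refine ⟨hDs, ?_⟩
  rw [Dt_eq_I_smul_Ds h₀₁ h₀₂ (iterate_Tmap_mem_basisSpan h₁₂ hmem b), hDs, smul_zero]

end Span

end SymplecticMonogenic

open SymplecticMonogenic

theorem highest_weight_vector_is_symplectic_h_monogenic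
    (n a b r : ℕ) (hn : 3 ≤ n) :
    Ds n (fun p : Vec n =>
        ((p.1 ⟨0, by omega⟩ : ℂ) + Complex.I * (p.2.1 ⟨0, by omega⟩ : ℂ)) ^ a *
          (Tmap n ⟨n - 2, by omega⟩ ⟨n - 1, by omega⟩)^[b]
            (fun p' : Vec n => (hermiteP (r - b) (p'.2.2 ⟨n - 1, by omega⟩) : ℂ) *
              Complex.exp (-(1 / 2 : ℂ) * ((∑ j : Fin n, (p'.2.2 j) ^ 2 : ℝ) : ℂ))) p)
      = (fun _ => 0) ∧
    Dt n (fun p : Vec n =>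
        ((p.1 ⟨0, by omega⟩ : ℂ) + Complex.I * (p.2.1 ⟨0, by omega⟩ : ℂ)) ^ a *
          (Tmap n ⟨n - 2, by omega⟩ ⟨n - 1, by omega⟩)^[b]
            (fun p' : Vec n => (hermiteP (r - b) (p'.2.2 ⟨n - 1, by omega⟩) : ℂ) *
              Complex.exp (-(1 / 2 : ℂ) * ((∑ j : Fin n, (p'.2.2 j) ^ 2 : ℝ) : ℂ))) p)
      = (fun _ => 0) := by
  set i₀ : Fin n := ⟨0, by omega⟩
  set i₁ : Fin n := ⟨n - 2, by omega⟩
  set i₂ : Fin n := ⟨n - 1, by omega⟩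
  have h₀₁ : i₀ ≠ i₁ := by simp only [i₀, i₁, ne_eq, Fin.mk.injEq]; omega
  have h₀₂ : i₀ ≠ i₂ := by simp only [i₀, i₂, ne_eq, Fin.mk.injEq]; omega
  have h₁₂ : i₁ ≠ i₂ := by simp only [i₁, i₂, ne_eq, Fin.mk.injEq]; omega
  have hw : (fun p : Vec n => ((p.1 i₀ : ℂ) + I * (p.2.1 i₀ : ℂ)) ^ a *
      (Tmap n i₁ i₂)^[b] (fun p' : Vec n => (hermiteP (r - b) (p'.2.2 i₂) : ℂ) *
        exp (-(1 / 2 : ℂ) * ((∑ j : Fin n, (p'.2.2 j) ^ 2 : ℝ) : ℂ))) p) =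
      (Tmap n i₁ i₂)^[b] (basisFn i₀ i₁ i₂ a 0 0 0 (r - b)) := by
    rw [← Tmap_iterate_mul_left (fun _ _ => rfl)]
    congr 1
    funext p
    simp [basisFn, tensor, xyMonomial, hermiteGaussian, hermiteP]
  rw [hw]
  exact iterate_Tmap_basisFn_monogenic h₀₁ h₀₂ h₁₂ a (r - b) b
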